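/- Let n ≥ 1. (i) For every x ∈ ℝⁿ and every r > 0, lim_{s→0⁺} s · Λ_{ℝⁿ}(x, r, s) = 1. (ii) If E ⊂ ℝⁿ is measurable and the limit Ξ_E = lim_{s→0⁺} s · Λ_E(x, r, s) exists for some (hence all) x ∈ ℝⁿ and r > 0, then Ξ_{E^c} = lim_{s→0⁺} s · Λ_{E^c}(x, r, s) also exists and Ξ_E + Ξ_{E^c} = 1, where E^c = ℝⁿ \ E. -/

import Mathlib

/-!
Splitting `ℝⁿ \ B(x, r)` along `E` gives `Λ_E + Λ_{Eᶜ} = Λ_{ℝⁿ}`, and since `p_t(x, ·)` is a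
probability density, `s Λ_E(x, r, s) ≤ s ∫₁^∞ t^{-(1+s)} dt = 1`. On the ball `B(x, r)` the
kernel is at most `(4πt)^{-n/2}`, so the mass `p_t` gives to `B(x, r)` is `O(t^{-n/2})`; since
`n ≥ 1`, its weighted integral `∫₁^∞ t^{-(1+s)} p_t(B(x, r)) dt` stays bounded as `s → 0⁺`, whence
`s Λ_{ℝⁿ}(x, r, s) = 1 - s ∫₁^∞ t^{-(1+s)} p_t(B(x, r)) dt → 1`.
-/

open MeasureTheory Real Filter Topology Set
open scoped ENNReal

/-- The classical heat kernel on `ℝⁿ`. -/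
noncomputable def heatKernel (n : ℕ) (t : ℝ) (x y : EuclideanSpace ℝ (Fin n)) : ℝ :=
  (4 * π * t) ^ (-(n : ℝ) / 2) * Real.exp (-‖x - y‖ ^ 2 / (4 * t))

/-- `Λ_E(x,r,s) = ∫₁^∞ t^{-(1+s)} ∫_{E \ B(x,r)} p_t(x,y) dy dt`. -/
noncomputable def LambdaE (n : ℕ) (E : Set (EuclideanSpace ℝ (Fin n)))
    (x : EuclideanSpace ℝ (Fin n)) (r s : ℝ) : ℝ≥0∞ :=
  ∫⁻ t in Set.Ioi (1:ℝ), ENNReal.ofReal (t ^ (-(1 + s))) *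
    ∫⁻ y in E \ Metric.ball x r, ENNReal.ofReal (heatKernel n t x y)

lemma integrable_exp_neg_mul_norm_sq {V : Type*} [NormedAddCommGroup V] [InnerProductSpace ℝ V]
    [FiniteDimensional ℝ V] [MeasurableSpace V] [BorelSpace V] {b : ℝ} (hb : 0 < b) :
    Integrable (fun v : V => rexp (-b * ‖v‖ ^ 2)) :=
  Integrable.of_integral_ne_zero <| by
    rw [GaussianFourier.integral_rexp_neg_mul_sq_norm hb]
    exact (rpow_pos_of_pos (div_pos pi_pos hb) _).ne'

lemma lintegral_heatKernel (n : ℕ) (x : EuclideanSpace ℝ (Fin n)) {t : ℝ} (ht : 0 < t) :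
    ∫⁻ y, ENNReal.ofReal (heatKernel n t x y) = 1 := by
  have h4πt : 0 < 4 * π * t := by positivity
  have hb : 0 < (4 * t)⁻¹ := by positivity
  have hkernel : heatKernel n t x =
      fun y => (4 * π * t) ^ (-(n : ℝ) / 2) * rexp (-(4 * t)⁻¹ * ‖x - y‖ ^ 2) := by
    ext y
    unfold heatKernel
    congr 2
    rw [neg_div, div_eq_inv_mul, neg_mul]
  have hint : Integrable (heatKernel n t x) := by
    rw [hkernel]
    exact ((integrable_exp_neg_mul_norm_sq hb).comp_sub_left x).const_mul _
  have hmass : ∫ y, heatKernel n t x y = 1 := by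
    rw [hkernel, integral_const_mul,
      integral_sub_left_eq_self (fun y => rexp (-(4 * t)⁻¹ * ‖y‖ ^ 2)) volume x,
      GaussianFourier.integral_rexp_neg_mul_sq_norm hb, finrank_euclideanSpace_fin,
      div_inv_eq_mul, show π * (4 * t) = 4 * π * t by ring, ← rpow_add h4πt,
      neg_div, neg_add_cancel, rpow_zero]
  rw [← ofReal_integral_eq_lintegral_ofReal hint, hmass, ENNReal.ofReal_one]
  exact Eventually.of_forall fun y => by rw [hkernel]; positivity

lemma measurable_setLIntegral_heatKernel (n : ℕ) (x : EuclideanSpace ℝ (Fin n))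
    (A : Set (EuclideanSpace ℝ (Fin n))) :
    Measurable fun t => ∫⁻ y in A, ENNReal.ofReal (heatKernel n t x y) := by
  have hjoint : Measurable fun p : ℝ × EuclideanSpace ℝ (Fin n) =>
      ENNReal.ofReal (heatKernel n p.1 x p.2) := by
    unfold heatKernel
    fun_prop
  exact hjoint.lintegral_prod_right'

lemma setLIntegral_heatKernel_le (n : ℕ) (x : EuclideanSpace ℝ (Fin n))
    (A : Set (EuclideanSpace ℝ (Fin n))) {t : ℝ} (ht : 0 < t) :
    ∫⁻ y in A, ENNReal.ofReal (heatKernel n t x y) ≤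
      ENNReal.ofReal ((4 * π) ^ (-(n : ℝ) / 2)) * volume A *
        ENNReal.ofReal (t ^ (-(n : ℝ) / 2)) := by
  have hkernel : ∀ y, heatKernel n t x y ≤ (4 * π) ^ (-(n : ℝ) / 2) * t ^ (-(n : ℝ) / 2) := by
    intro y
    rw [← mul_rpow (by positivity) ht.le]
    refine mul_le_of_le_one_right (by positivity) (exp_le_one_iff.2 ?_)
    rw [neg_div]
    exact neg_nonpos.2 (by positivity)
  calc ∫⁻ y in A, ENNReal.ofReal (heatKernel n t x y)
      ≤ ∫⁻ _ in A, ENNReal.ofReal ((4 * π) ^ (-(n : ℝ) / 2) * t ^ (-(n : ℝ) / 2)) :=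
        lintegral_mono fun y => ENNReal.ofReal_le_ofReal (hkernel y)
    _ = _ := by
        rw [setLIntegral_const, ENNReal.ofReal_mul (by positivity)]
        ring

lemma lintegral_Ioi_one_rpow {a : ℝ} (ha : a < -1) :
    ∫⁻ t in Ioi (1 : ℝ), ENNReal.ofReal (t ^ a) = ENNReal.ofReal (-1 / (a + 1)) := by
  have hnonneg : 0 ≤ᵐ[volume.restrict (Ioi (1 : ℝ))] fun t => t ^ a := by
    filter_upwards [ae_restrict_mem measurableSet_Ioi] with t ht
    exact rpow_nonneg (zero_le_one.trans ht.le) a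
  rw [← ofReal_integral_eq_lintegral_ofReal (integrableOn_Ioi_rpow_of_lt ha one_pos) hnonneg,
    integral_Ioi_rpow_of_lt ha one_pos, one_rpow]

lemma ofReal_mul_lintegral_Ioi_one_rpow_neg_one_sub {s : ℝ} (hs : 0 < s) :
    ENNReal.ofReal s * ∫⁻ t in Ioi (1 : ℝ), ENNReal.ofReal (t ^ (-(1 + s))) = 1 := by
  rw [lintegral_Ioi_one_rpow (by linarith), ← ENNReal.ofReal_mul hs.le,
    show -(1 + s) + 1 = -s by ring, neg_div_neg_eq, mul_one_div_cancel hs.ne', ENNReal.ofReal_one]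

lemma ofReal_mul_LambdaE_le_one (n : ℕ) (E : Set (EuclideanSpace ℝ (Fin n)))
    (x : EuclideanSpace ℝ (Fin n)) (r : ℝ) {s : ℝ} (hs : 0 < s) :
    ENNReal.ofReal s * LambdaE n E x r s ≤ 1 := by
  rw [← ofReal_mul_lintegral_Ioi_one_rpow_neg_one_sub hs]
  refine mul_le_mul_right (setLIntegral_mono' measurableSet_Ioi fun t ht => ?_) _
  calc ENNReal.ofReal (t ^ (-(1 + s))) *
        ∫⁻ y in E \ Metric.ball x r, ENNReal.ofReal (heatKernel n t x y)
      ≤ ENNReal.ofReal (t ^ (-(1 + s))) * ∫⁻ y, ENNReal.ofReal (heatKernel n t x y) := by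
        gcongr
        exact Measure.restrict_le_self
    _ = ENNReal.ofReal (t ^ (-(1 + s))) := by
        rw [lintegral_heatKernel n x (zero_lt_one.trans ht), mul_one]

lemma LambdaE_add_compl (n : ℕ) {E : Set (EuclideanSpace ℝ (Fin n))} (hE : MeasurableSet E)
    (x : EuclideanSpace ℝ (Fin n)) (r s : ℝ) :
    LambdaE n E x r s + LambdaE n Eᶜ x r s = LambdaE n univ x r s := by
  unfold LambdaE
  have hmeas := measurable_setLIntegral_heatKernel n x (E \ Metric.ball x r)
  rw [← lintegral_add_left (by fun_prop)]
  refine setLIntegral_congr_fun measurableSet_Ioi fun t _ => ?_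
  rw [← mul_add, ← lintegral_union (hE.compl.diff measurableSet_ball)
    (disjoint_compl_right.mono sdiff_subset sdiff_subset), ← union_sdiff_distrib, union_compl_self]

lemma LambdaE_univ_add_setLIntegral_ball (n : ℕ) (x : EuclideanSpace ℝ (Fin n)) (r s : ℝ) :
    LambdaE n univ x r s + ∫⁻ t in Ioi (1 : ℝ), ENNReal.ofReal (t ^ (-(1 + s))) *
        ∫⁻ y in Metric.ball x r, ENNReal.ofReal (heatKernel n t x y) =
      ∫⁻ t in Ioi (1 : ℝ), ENNReal.ofReal (t ^ (-(1 + s))) := by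
  have hmeas := measurable_setLIntegral_heatKernel n x (Metric.ball x r)
  rw [LambdaE, ← lintegral_add_right _ (by fun_prop)]
  refine setLIntegral_congr_fun measurableSet_Ioi fun t ht => ?_
  rw [← mul_add, ← compl_eq_univ_sdiff, add_comm (∫⁻ _ in _ᶜ, _),
    lintegral_add_compl _ measurableSet_ball, lintegral_heatKernel n x (zero_lt_one.trans ht),
    mul_one]

lemma lintegral_Ioi_one_rpow_mul_setLIntegral_ball_heatKernel_le {n : ℕ} (hn : 1 ≤ n)
    (x : EuclideanSpace ℝ (Fin n)) (r : ℝ) {s : ℝ} (hs : 0 ≤ s) :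
    ∫⁻ t in Ioi (1 : ℝ), ENNReal.ofReal (t ^ (-(1 + s))) *
        ∫⁻ y in Metric.ball x r, ENNReal.ofReal (heatKernel n t x y) ≤
      ENNReal.ofReal ((4 * π) ^ (-(n : ℝ) / 2)) * volume (Metric.ball x r) *
        ENNReal.ofReal (2 / n) := by
  set C := ENNReal.ofReal ((4 * π) ^ (-(n : ℝ) / 2)) * volume (Metric.ball x r)
  have hn' : (1 : ℝ) ≤ n := by exact_mod_cast hn
  have hpointwise : ∀ t ∈ Ioi (1 : ℝ), ENNReal.ofReal (t ^ (-(1 + s))) *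
      ∫⁻ y in Metric.ball x r, ENNReal.ofReal (heatKernel n t x y) ≤
        C * ENNReal.ofReal (t ^ (-(1 + (n : ℝ) / 2))) := by
    intro t ht
    have ht0 : 0 < t := zero_lt_one.trans ht
    calc ENNReal.ofReal (t ^ (-(1 + s))) *
          ∫⁻ y in Metric.ball x r, ENNReal.ofReal (heatKernel n t x y)
        ≤ ENNReal.ofReal (t ^ (-1 : ℝ)) * (C * ENNReal.ofReal (t ^ (-(n : ℝ) / 2))) := by
          gcongr
          · exact ht.le
          · linarith
          · exact setLIntegral_heatKernel_le n x _ ht0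
      _ = C * ENNReal.ofReal (t ^ (-(1 + (n : ℝ) / 2))) := by
          rw [mul_left_comm, ← ENNReal.ofReal_mul (by positivity), ← rpow_add ht0, neg_div,
            neg_add]
  calc _ ≤ ∫⁻ t in Ioi (1 : ℝ), C * ENNReal.ofReal (t ^ (-(1 + (n : ℝ) / 2))) :=
        setLIntegral_mono' measurableSet_Ioi hpointwise
    _ = C * ENNReal.ofReal (2 / n) := by
        rw [lintegral_const_mul' _ _ (by finiteness), lintegral_Ioi_one_rpow (by linarith),
          show -(1 + (n : ℝ) / 2) + 1 = -((n : ℝ) / 2) by ring, neg_div_neg_eq, one_div_div]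

lemma tendsto_ofReal_mul_LambdaE_univ {n : ℕ} (hn : 1 ≤ n) (x : EuclideanSpace ℝ (Fin n))
    (r : ℝ) :
    Tendsto (fun s => ENNReal.ofReal s * LambdaE n univ x r s) (𝓝[>] 0) (𝓝 1) := by
  set G : ℝ → ℝ≥0∞ := fun s => ∫⁻ t in Ioi (1 : ℝ), ENNReal.ofReal (t ^ (-(1 + s))) *
    ∫⁻ y in Metric.ball x r, ENNReal.ofReal (heatKernel n t x y)
  set K := ENNReal.ofReal ((4 * π) ^ (-(n : ℝ) / 2)) * volume (Metric.ball x r) *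
    ENNReal.ofReal (2 / n)
  have hK : K ≠ ∞ := by finiteness
  have hsK : Tendsto (fun s => ENNReal.ofReal s * K) (𝓝[>] 0) (𝓝 0) := by
    have hs : Tendsto ENNReal.ofReal (𝓝[>] 0) (𝓝 0) :=
      (ENNReal.continuous_ofReal.tendsto' 0 0 ENNReal.ofReal_zero).mono_left nhdsWithin_le_nhds
    simpa using ENNReal.Tendsto.mul_const hs (Or.inr hK)
  have hsG : Tendsto (fun s => ENNReal.ofReal s * G s) (𝓝[>] 0) (𝓝 0) :=
    tendsto_of_tendsto_of_tendsto_of_le_of_le' tendsto_const_nhds hsK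
      (Eventually.of_forall fun _ => zero_le)
      (eventually_nhdsWithin_of_forall fun s hs => mul_le_mul_right
        (lintegral_Ioi_one_rpow_mul_setLIntegral_ball_heatKernel_le hn x r (le_of_lt hs)) _)
  have hsplit : ∀ s > (0 : ℝ), ENNReal.ofReal s * LambdaE n univ x r s =
      1 - ENNReal.ofReal s * G s := by
    intro s hs
    have hsum := congrArg (ENNReal.ofReal s * ·) (LambdaE_univ_add_setLIntegral_ball n x r s)
    simp only [mul_add, ofReal_mul_lintegral_Ioi_one_rpow_neg_one_sub hs] at hsum
    exact ENNReal.eq_sub_of_add_eq (ne_top_of_le_ne_top ENNReal.one_ne_top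
      (le_of_le_of_eq le_add_self hsum)) hsum
  have hlim := ENNReal.Tendsto.sub tendsto_const_nhds hsG (Or.inl ENNReal.one_ne_top)
  rw [tsub_zero] at hlim
  exact hlim.congr' (eventually_nhdsWithin_of_forall fun s hs => (hsplit s hs).symm)

lemma tendsto_ofReal_mul_LambdaE_compl {n : ℕ} (hn : 1 ≤ n) {E : Set (EuclideanSpace ℝ (Fin n))}
    (hE : MeasurableSet E) (x : EuclideanSpace ℝ (Fin n)) (r : ℝ) {Ξ : ℝ≥0∞}
    (hΞ : Tendsto (fun s => ENNReal.ofReal s * LambdaE n E x r s) (𝓝[>] 0) (𝓝 Ξ)) :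
    Tendsto (fun s => ENNReal.ofReal s * LambdaE n Eᶜ x r s) (𝓝[>] 0) (𝓝 (1 - Ξ)) := by
  refine (ENNReal.Tendsto.sub (tendsto_ofReal_mul_LambdaE_univ hn x r) hΞ
    (Or.inl ENNReal.one_ne_top)).congr' (eventually_nhdsWithin_of_forall fun s hs => ?_)
  rw [← LambdaE_add_compl n hE, mul_add, ENNReal.add_sub_cancel_left
    (ne_top_of_le_ne_top ENNReal.one_ne_top (ofReal_mul_LambdaE_le_one n E x r hs))]

/-- (i) `lim_{s→0⁺} s Λ_{ℝⁿ}(x,r,s) = 1` for all `x` and `r > 0`;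
(ii) if `Ξ_E = lim_{s→0⁺} s Λ_E(x,r,s)` exists, then `Ξ_{E^c}` exists and `Ξ_E + Ξ_{E^c} = 1`. -/
theorem statement13 (n : ℕ) (hn : 1 ≤ n) :
    (∀ x : EuclideanSpace ℝ (Fin n), ∀ r : ℝ, 0 < r →
        Tendsto (fun s : ℝ => ENNReal.ofReal s * LambdaE n Set.univ x r s)
          (𝓝[>] (0:ℝ)) (𝓝 1)) ∧
      ∀ E : Set (EuclideanSpace ℝ (Fin n)), MeasurableSet E →
        ∀ x : EuclideanSpace ℝ (Fin n), ∀ r : ℝ, 0 < r → ∀ ΞE : ℝ≥0∞,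
          Tendsto (fun s : ℝ => ENNReal.ofReal s * LambdaE n E x r s)
            (𝓝[>] (0:ℝ)) (𝓝 ΞE) →
          ∃ Ξc : ℝ≥0∞,
            Tendsto (fun s : ℝ => ENNReal.ofReal s * LambdaE n Eᶜ x r s)
              (𝓝[>] (0:ℝ)) (𝓝 Ξc) ∧ ΞE + Ξc = 1 := by
  refine ⟨fun x r _ => tendsto_ofReal_mul_LambdaE_univ hn x r, fun E hE x r _ ΞE hΞE => ?_⟩
  have hΞE_le : ΞE ≤ 1 := le_of_tendsto hΞE
    (eventually_nhdsWithin_of_forall fun s hs => ofReal_mul_LambdaE_le_one n E x r hs)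
  exact ⟨1 - ΞE, tendsto_ofReal_mul_LambdaE_compl hn hE x r hΞE, add_tsub_cancel_of_le hΞE_le⟩
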